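/- arXiv:0909.2622 — 3 statements merged into one kernel-verified Lean document; each statement's English description precedes it below -/
import Mathlib

section
/- Let n_T = 2 and suppose the Hermitian 2×2 matrix H_R†H_R − H_E†H_E has a positive eigenvalue but is not positive definite. Then sup_{Q ∈ Ω} C_s(Q) = log λ_max(M), where M = (I + ρ H_E†H_E)^{-1/2}(I + ρ H_R†H_R)(I + ρ H_E†H_E)^{-1/2} is Hermitian positive definite, and the supremum is attained at a rank-one matrix Q = u u† for some unit vector u ∈ ℂ². -/
open Matrix
open scoped ComplexOrder

/-- The largest eigenvalue of a (Hermitian) complex matrix, expressed as the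
supremum of its real eigenvalues. -/
noncomputable def lamMax {n : ℕ} (A : Matrix (Fin n) (Fin n) ℂ) : ℝ :=
  sSup {t : ℝ | ∃ v : Fin n → ℂ, v ≠ 0 ∧ A *ᵥ v = (t : ℂ) • v}

/-- The positive semidefinite square root of a positive semidefinite matrix
(the definition `Matrix.PosSemidef.sqrt` of the older Mathlib, since removed). -/
noncomputable def Matrix.PosSemidef.sqrt {n : Type*} [Fintype n] [DecidableEq n]
    {A : Matrix n n ℂ} (hA : A.PosSemidef) : Matrix n n ℂ :=
  (hA.1.eigenvectorUnitary : Matrix n n ℂ) * diagonal ((↑) ∘ (Real.sqrt ·) ∘ hA.1.eigenvalues) *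
    (star (hA.1.eigenvectorUnitary : Matrix n n ℂ))

/-!
Put `A = I + ρ H_R†H_R`, `B = I + ρ H_E†H_E`, `M = B^{-1/2} A B^{-1/2}` and `λ = λ_max(M)`.
Then `A ≤ λ B` in the Loewner order, with equality of quadratic forms at `u = B^{-1/2} v` for a
top eigenvector `v` of `M`; for `Q = u u†` the matrix determinant lemma turns `C_s(Q)` into
`log (u†Au / u†Bu) = log λ`.

For the upper bound write `Q = S²`. By Sylvester's identity `C_s(Q) = log det R - log det P` with
`R = I + ρ S H_R†H_R S` and `P = I + ρ S H_E†H_E S`. Since `Q ≤ I` and `λ ≥ 1` (a consequence of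
the positive eigenvalue of `H_R†H_R - H_E†H_E`), `R ≤ λ P`; and `R - P = ρ S (H_R†H_R - H_E†H_E) S`
is not positive definite. So the `2 × 2` matrix `P^{-1/2} R P^{-1/2}` has both eigenvalues in
`[0, λ]` and one of them at most `1`, whence `det R ≤ λ det P`.
-/

open scoped MatrixOrder

namespace Matrix

section Sqrt

variable {n : Type*} [Fintype n] [DecidableEq n]

theorem PosSemidef.sqrt_eq_cfcSqrt {A : Matrix n n ℂ} (hA : A.PosSemidef) :
    hA.sqrt = CFC.sqrt A := by
  rw [CFC.sqrt_eq_real_sqrt A hA.nonneg, cfcₙ_eq_cfc, hA.1.cfc_eq, IsHermitian.cfc,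
    Unitary.conjStarAlgAut_apply]
  rfl

theorem star_inv_sqrt (B : Matrix n n ℂ) : star (CFC.sqrt B)⁻¹ = (CFC.sqrt B)⁻¹ := by
  rw [star_eq_conjTranspose, conjTranspose_nonsing_inv, ← star_eq_conjTranspose,
    (IsSelfAdjoint.of_nonneg (CFC.sqrt_nonneg B)).star_eq]

theorem PosDef.isUnit_det_sqrt {B : Matrix n n ℂ} (hB : B.PosDef) : IsUnit (CFC.sqrt B).det :=
  (isUnit_iff_isUnit_det _).mp ((CFC.isUnit_sqrt_iff B hB.posSemidef.nonneg).mpr hB.isUnit)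

theorem PosDef.inv_sqrt_mul_self_mul_inv_sqrt {B : Matrix n n ℂ} (hB : B.PosDef) :
    (CFC.sqrt B)⁻¹ * B * (CFC.sqrt B)⁻¹ = 1 := by
  nth_rw 2 [← CFC.sqrt_mul_sqrt_self B hB.posSemidef.nonneg]
  rw [← mul_assoc, nonsing_inv_mul _ hB.isUnit_det_sqrt, one_mul,
    mul_nonsing_inv _ hB.isUnit_det_sqrt]

theorem PosDef.sqrt_conj_inv_sqrt_conj {B : Matrix n n ℂ} (hB : B.PosDef) (A : Matrix n n ℂ) :
    CFC.sqrt B * ((CFC.sqrt B)⁻¹ * A * (CFC.sqrt B)⁻¹) * CFC.sqrt B = A := by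
  simp only [← mul_assoc, mul_nonsing_inv _ hB.isUnit_det_sqrt, one_mul]
  rw [mul_assoc, nonsing_inv_mul _ hB.isUnit_det_sqrt, mul_one]

theorem IsHermitian.inv_sqrt_conj {A : Matrix n n ℂ} (hA : A.IsHermitian) (B : Matrix n n ℂ) :
    ((CFC.sqrt B)⁻¹ * A * (CFC.sqrt B)⁻¹).IsHermitian := by
  simpa only [← star_eq_conjTranspose, star_inv_sqrt] using
    isHermitian_conjTranspose_mul_mul (CFC.sqrt B)⁻¹ hA

theorem PosDef.inv_sqrt_conj {A B : Matrix n n ℂ} (hA : A.PosDef) (hB : B.PosDef) :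
    ((CFC.sqrt B)⁻¹ * A * (CFC.sqrt B)⁻¹).PosDef := by
  nth_rw 1 [← star_inv_sqrt]
  exact (isUnit_nonsing_inv_iff.mpr ((isUnit_iff_isUnit_det _).mpr hB.isUnit_det_sqrt)
    |>.posDef_star_left_conjugate_iff).mpr hA

end Sqrt

section Spectrum

theorem setOf_mulVec_eq_smul_eq_spectrum {n : Type*} [Fintype n] [DecidableEq n]
    (A : Matrix n n ℂ) :
    {t : ℝ | ∃ v : n → ℂ, v ≠ 0 ∧ A *ᵥ v = (t : ℂ) • v} = spectrum ℝ A := by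
  ext t
  rw [Set.mem_ofPred_eq, ← spectrum.algebraMap_mem_iff ℂ, ← spectrum_toLin',
    ← Module.End.hasEigenvalue_iff_mem_spectrum]
  constructor
  · rintro ⟨v, hv, hAv⟩
    exact Module.End.hasEigenvalue_of_hasEigenvector ⟨Module.End.mem_eigenspace_iff.mpr hAv, hv⟩
  · intro h
    obtain ⟨v, hv, hne⟩ := h.exists_hasEigenvector
    exact ⟨v, hne, Module.End.mem_eigenspace_iff.mp hv⟩

variable {k : ℕ} {A : Matrix (Fin k) (Fin k) ℂ}

theorem IsHermitian.lamMax_mem_spectrum [NeZero k] (hA : A.IsHermitian) :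
    lamMax A ∈ spectrum ℝ A := by
  unfold lamMax
  rw [setOf_mulVec_eq_smul_eq_spectrum]
  exact Set.Nonempty.csSup_mem (hA.spectrum_real_eq_range_eigenvalues ▸ Set.range_nonempty _)
    A.finite_real_spectrum

theorem IsHermitian.le_lamMax_smul_one (hA : A.IsHermitian) : A ≤ lamMax A • 1 := by
  rw [← Algebra.algebraMap_eq_smul_one]
  refine le_algebraMap_of_spectrum_le (fun x hx => ?_) hA.isSelfAdjoint
  unfold lamMax
  rw [setOf_mulVec_eq_smul_eq_spectrum]
  exact le_csSup A.finite_real_spectrum.bddAbove hx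

end Spectrum

theorem PosSemidef.one_add_smul_posDef {n : Type*} [DecidableEq n] {X : Matrix n n ℂ}
    (hX : X.PosSemidef) {ρ : ℝ} (hρ : 0 ≤ ρ) : (1 + (ρ : ℂ) • X).PosDef :=
  PosDef.one.add_posSemidef (hX.smul (by exact_mod_cast hρ))

section QuadraticForm

variable {n : Type*} [Fintype n]

theorem dotProduct_mulVec_star_mul_mul (S X : Matrix n n ℂ) (u : n → ℂ) :
    star u ⬝ᵥ ((star S * X * S) *ᵥ u) = star (S *ᵥ u) ⬝ᵥ (X *ᵥ (S *ᵥ u)) := by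
  rw [← mulVec_mulVec, ← mulVec_mulVec, dotProduct_mulVec, star_mulVec, star_eq_conjTranspose]

theorem IsSelfAdjoint.posSemidef_mul_conjTranspose_mul_self_mul {l : Type*} [Fintype l]
    {S : Matrix n n ℂ} (hS : IsSelfAdjoint S) (H : Matrix l n ℂ) :
    (S * (Hᴴ * H) * S).PosSemidef := by
  have := (posSemidef_conjTranspose_mul_self H).conjTranspose_mul_mul_same S
  rwa [← star_eq_conjTranspose, hS.star_eq] at this

theorem exists_real_smul_dotProduct_star_self_eq_one {w : n → ℂ} (hw : w ≠ 0) :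
    ∃ r : ℝ, star ((r : ℂ) • w) ⬝ᵥ ((r : ℂ) • w) = 1 := by
  obtain ⟨p, hp, hpw⟩ := RCLike.pos_iff_exists_ofReal.mp (dotProduct_star_self_pos_iff.mpr hw)
  replace hpw : (p : ℂ) = star w ⬝ᵥ w := hpw
  refine ⟨(√p)⁻¹, ?_⟩
  rw [star_smul, smul_dotProduct, dotProduct_smul, ← hpw]
  simp only [Complex.star_def, Complex.conj_ofReal, smul_eq_mul]
  rw [← Complex.ofReal_mul, ← Complex.ofReal_mul, ← Complex.ofReal_one]
  congr 1
  field_simp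
  rw [Real.sq_sqrt hp.le]

theorem one_le_of_le_smul_of_mulVec_sub_eq {A B : Matrix n n ℂ} {c t : ℝ} (hB : B.PosSemidef)
    (hAB : A ≤ c • B) (ht : 0 < t) {v : n → ℂ} (hv : v ≠ 0)
    (hABv : (A - B) *ᵥ v = (t : ℂ) • v) : 1 ≤ c := by
  by_contra! hc
  have hBA : A ≤ B := by
    refine hAB.trans (le_iff.mpr ?_)
    rw [show B - c • B = (1 - c) • B by rw [sub_smul, one_smul]]
    exact hB.smul (sub_nonneg.mpr hc.le)
  have h := (le_iff.mp hBA).dotProduct_mulVec_nonneg v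
  rw [← neg_sub, neg_mulVec, hABv, dotProduct_neg, dotProduct_smul, smul_eq_mul] at h
  exact (neg_nonneg.mp h).not_gt
    (mul_pos (by exact_mod_cast ht) (dotProduct_star_self_pos_iff.mpr hv))

variable [DecidableEq n]

theorem not_posDef_star_mul_mul {D : Matrix n n ℂ} (hD : ¬ D.PosDef) (S : Matrix n n ℂ) :
    ¬ (star S * D * S).PosDef := by
  by_cases hS : IsUnit S
  · rwa [hS.posDef_star_left_conjugate_iff]
  · intro hpd
    obtain ⟨z, hz, hSz⟩ := exists_mulVec_eq_zero_iff.mpr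
      (by simpa [isUnit_iff_isUnit_det] using hS)
    have := hpd.dotProduct_mulVec_pos hz
    rw [← mulVec_mulVec, hSz, mulVec_zero, dotProduct_zero] at this
    exact this.false

theorem PosSemidef.le_one_of_trace_eq_one {Q : Matrix n n ℂ} (hQ : Q.PosSemidef)
    (htr : Q.trace = 1) : Q ≤ 1 := by
  rw [← map_one (algebraMap ℝ (Matrix n n ℂ))]
  refine le_algebraMap_of_spectrum_le (fun x hx => ?_) hQ.1.isSelfAdjoint
  obtain ⟨i, rfl⟩ := hQ.1.spectrum_real_eq_range_eigenvalues ▸ hx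
  have hsum : ∑ j, hQ.1.eigenvalues j = 1 := by
    simpa using congrArg Complex.re (hQ.1.trace_eq_sum_eigenvalues.symm.trans htr)
  exact hsum ▸ Finset.single_le_sum (fun j _ => hQ.eigenvalues_nonneg j) (Finset.mem_univ i)

theorem one_add_smul_conj_le_smul {S Q X Y : Matrix n n ℂ} {ρ : ℂ} {c : ℝ}
    (hS : IsSelfAdjoint S) (hSQ : S * S = Q) (hQ : Q ≤ 1) (hc : 1 ≤ c)
    (hXY : 1 + ρ • X ≤ c • (1 + ρ • Y)) :
    1 + ρ • (S * X * S) ≤ c • (1 + ρ • (S * Y * S)) := by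
  have hconj : ∀ Z : Matrix n n ℂ, 1 + ρ • (S * Z * S) = S * (1 + ρ • Z) * S + (1 - Q) := by
    intro Z
    rw [mul_add, add_mul, mul_one, hSQ, mul_smul_comm, smul_mul_assoc]
    abel
  have hQc : 1 - Q ≤ c • (1 - Q) := by
    rw [le_iff, show c • (1 - Q) - (1 - Q) = (c - 1) • (1 - Q) by rw [sub_smul, one_smul]]
    exact (le_iff.mp hQ).smul (sub_nonneg.mpr hc)
  rw [hconj, hconj, smul_add]
  refine add_le_add ?_ hQc
  calc S * (1 + ρ • X) * S ≤ S * (c • (1 + ρ • Y)) * S := hS.conjugate_le_conjugate hXY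
    _ = c • (S * (1 + ρ • Y) * S) := by rw [mul_smul_comm, smul_mul_assoc]

end QuadraticForm

section Sylvester

variable {m n α : Type*} [Fintype m] [Fintype n] [DecidableEq m] [CommRing α]

theorem det_one_add_smul_mul_mul_comm [DecidableEq n] (c : α) (H : Matrix m n α)
    (K : Matrix n m α) {S Q : Matrix n n α} (hSQ : S * S = Q) :
    (1 + c • (H * Q * K)).det = (1 + c • (S * (K * H) * S)).det := by
  have h := det_one_add_mul_comm (H * S) (c • (S * K))
  simp only [Matrix.mul_smul, Matrix.smul_mul, Matrix.mul_assoc, ← hSQ] at h ⊢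
  exact h

theorem det_one_add_smul_mul_vecMulVec_mul (c : α) (H : Matrix m n α) (K : Matrix n m α)
    (u v : n → α) :
    (1 + c • (H * vecMulVec u v * K)).det = 1 + c * (v ⬝ᵥ ((K * H) *ᵥ u)) := by
  have h := det_one_add_mul_comm (H * replicateCol Unit u) (c • (replicateRow Unit v * K))
  rw [vecMulVec_eq Unit]
  simp only [Matrix.mul_smul, Matrix.smul_mul, Matrix.mul_assoc] at h ⊢
  rw [h, det_unique, ← mulVec_mulVec]
  simp [Matrix.mul_apply, dotProduct, mulVec, Finset.mul_sum]

end Sylvester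

theorem det_le_of_le_smul_one_of_not_posDef_sub_one {G : Matrix (Fin 2) (Fin 2) ℂ} {c : ℝ}
    (hG : G.PosSemidef) (hGc : G ≤ c • 1) (h : ¬ (G - 1).PosDef) : G.det ≤ c := by
  set e := hG.1.eigenvalues
  have he_le : ∀ i, e i ≤ c := by
    rw [← Algebra.algebraMap_eq_smul_one, le_algebraMap_iff_spectrum_le hG.1.isSelfAdjoint] at hGc
    exact fun i => hGc _ (hG.1.eigenvalues_mem_spectrum_real i)
  -- This is where `n_T = 2` is used: one eigenvalue `≤ 1` and the other `≤ c` give `det G ≤ c`.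
  have he_one : e 0 ≤ 1 ∨ e 1 ≤ 1 := by
    by_contra! he
    apply h
    have hm : algebraMap ℝ _ (min (e 0) (e 1)) ≤ G := by
      refine algebraMap_le_of_le_spectrum (fun x hx => ?_) hG.1.isSelfAdjoint
      obtain ⟨i, rfl⟩ := hG.1.spectrum_real_eq_range_eigenvalues ▸ hx
      fin_cases i
      exacts [min_le_left _ _, min_le_right _ _]
    have hsplit : G - 1 =
        (G - algebraMap ℝ _ (min (e 0) (e 1))) + (min (e 0) (e 1) - 1) • 1 := by
      rw [Algebra.algebraMap_eq_smul_one, sub_smul, one_smul]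
      abel
    rw [hsplit]
    exact PosDef.posSemidef_add (le_iff.mp hm) (PosDef.one.smul (sub_pos.mpr (lt_min he.1 he.2)))
  have h0 := hG.eigenvalues_nonneg 0
  have h1 := hG.eigenvalues_nonneg 1
  have hprod : e 0 * e 1 ≤ c := by
    rcases he_one with h | h <;> nlinarith [he_le 0, he_le 1]
  rw [hG.1.det_eq_prod_eigenvalues, Fin.prod_univ_two, ← RCLike.ofReal_mul]
  exact RCLike.ofReal_le_ofReal.mpr hprod

theorem det_le_of_le_smul_of_not_posDef_sub {R P : Matrix (Fin 2) (Fin 2) ℂ} {c : ℝ}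
    (hR : R.PosSemidef) (hP : P.PosDef) (hRP : R ≤ c • P) (h : ¬ (R - P).PosDef) :
    R.det ≤ c * P.det := by
  set q := (CFC.sqrt P)⁻¹
  have hq : IsUnit q :=
    isUnit_nonsing_inv_iff.mpr ((isUnit_iff_isUnit_det _).mpr hP.isUnit_det_sqrt)
  have hq_star : star q = q := star_inv_sqrt P
  have hqPq : q * P * q = 1 := hP.inv_sqrt_mul_self_mul_inv_sqrt
  have hG : (q * R * q).PosSemidef := by
    have := hR.conjTranspose_mul_mul_same q
    rwa [← star_eq_conjTranspose, hq_star] at this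
  have hGc : q * R * q ≤ c • 1 :=
    calc q * R * q ≤ q * (c • P) * q := IsSelfAdjoint.conjugate_le_conjugate hRP hq_star
      _ = c • 1 := by rw [mul_smul_comm, smul_mul_assoc, hqPq]
  have hG1 : ¬ (q * R * q - 1).PosDef := by
    rw [← hqPq, ← sub_mul, ← mul_sub]
    nth_rw 1 [← hq_star]
    rwa [hq.posDef_star_left_conjugate_iff]
  have hdet : R.det = P.det * (q * R * q).det := by
    have h1 : (q * P * q).det = 1 := by rw [hqPq, det_one]
    simp only [det_mul] at h1 ⊢
    linear_combination (-R.det) * h1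
  rw [hdet, mul_comm (c : ℂ)]
  exact mul_le_mul_of_nonneg_left (det_le_of_le_smul_one_of_not_posDef_sub_one hG hGc hG1)
    hP.det_pos.le

section Pencil

variable {k : ℕ} {A B : Matrix (Fin k) (Fin k) ℂ}

theorem PosDef.le_lamMax_inv_sqrt_conj_smul (hA : A.IsHermitian) (hB : B.PosDef) :
    A ≤ lamMax ((CFC.sqrt B)⁻¹ * A * (CFC.sqrt B)⁻¹) • B := by
  set M := (CFC.sqrt B)⁻¹ * A * (CFC.sqrt B)⁻¹
  calc A = CFC.sqrt B * M * CFC.sqrt B := (hB.sqrt_conj_inv_sqrt_conj A).symm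
    _ ≤ CFC.sqrt B * (lamMax M • 1) * CFC.sqrt B :=
      (IsSelfAdjoint.of_nonneg (CFC.sqrt_nonneg B)).conjugate_le_conjugate
        (hA.inv_sqrt_conj B).le_lamMax_smul_one
    _ = lamMax M • B := by
      rw [mul_smul_comm, mul_one, smul_mul_assoc, CFC.sqrt_mul_sqrt_self B hB.posSemidef.nonneg]

theorem PosDef.exists_dotProduct_mulVec_eq_lamMax_mul [NeZero k] (hA : A.IsHermitian)
    (hB : B.PosDef) : ∃ u : Fin k → ℂ, star u ⬝ᵥ u = 1 ∧
      star u ⬝ᵥ (A *ᵥ u) =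
        lamMax ((CFC.sqrt B)⁻¹ * A * (CFC.sqrt B)⁻¹) * star u ⬝ᵥ (B *ᵥ u) := by
  set s := CFC.sqrt B
  set M := s⁻¹ * A * s⁻¹
  have hs : star s = s := (IsSelfAdjoint.of_nonneg (CFC.sqrt_nonneg B)).star_eq
  obtain ⟨v, hv, hMv⟩ : lamMax M ∈ {t : ℝ | ∃ v : Fin k → ℂ, v ≠ 0 ∧ M *ᵥ v = (t : ℂ) • v} :=
    (setOf_mulVec_eq_smul_eq_spectrum M).symm ▸ (hA.inv_sqrt_conj B).lamMax_mem_spectrum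
  have hsv : s *ᵥ (s⁻¹ *ᵥ v) = v := by
    rw [mulVec_mulVec, mul_nonsing_inv _ hB.isUnit_det_sqrt, one_mulVec]
  obtain ⟨r, hr⟩ := exists_real_smul_dotProduct_star_self_eq_one (w := s⁻¹ *ᵥ v)
    fun h => hv (by rw [← hsv, h, mulVec_zero])
  refine ⟨(r : ℂ) • (s⁻¹ *ᵥ v), hr, ?_⟩
  have hsu : s *ᵥ ((r : ℂ) • (s⁻¹ *ᵥ v)) = (r : ℂ) • v := by rw [mulVec_smul, hsv]
  have hA' : A = star s * M * s := by rw [hs]; exact (hB.sqrt_conj_inv_sqrt_conj A).symm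
  have hB' : B = star s * 1 * s := by
    rw [hs, mul_one]; exact (CFC.sqrt_mul_sqrt_self B hB.posSemidef.nonneg).symm
  rw [hA', hB', dotProduct_mulVec_star_mul_mul, dotProduct_mulVec_star_mul_mul, hsu, one_mulVec,
    mulVec_smul, hMv, smul_comm, dotProduct_smul, smul_eq_mul]

end Pencil

theorem det_le_smul_det_of_trace_eq_one {m m' : Type*} [Fintype m] [Fintype m'] [DecidableEq m]
    [DecidableEq m'] (HR : Matrix m (Fin 2) ℂ) (HE : Matrix m' (Fin 2) ℂ) {ρ c : ℝ} (hρ : 0 < ρ)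
    (hc : 1 ≤ c) (hAB : 1 + (ρ : ℂ) • (HRᴴ * HR) ≤ c • (1 + (ρ : ℂ) • (HEᴴ * HE)))
    (hnpd : ¬ (HRᴴ * HR - HEᴴ * HE).PosDef) {Q : Matrix (Fin 2) (Fin 2) ℂ}
    (hQ : Q.PosSemidef) (htr : Q.trace = 1) :
    (1 + (ρ : ℂ) • (HR * Q * HRᴴ)).det ≤ (c : ℂ) * (1 + (ρ : ℂ) • (HE * Q * HEᴴ)).det := by
  obtain ⟨S, hS, hSQ⟩ : ∃ S : Matrix (Fin 2) (Fin 2) ℂ, IsSelfAdjoint S ∧ S * S = Q :=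
    ⟨CFC.sqrt Q, .of_nonneg (CFC.sqrt_nonneg Q), CFC.sqrt_mul_sqrt_self Q hQ.nonneg⟩
  rw [det_one_add_smul_mul_mul_comm _ HR HRᴴ hSQ, det_one_add_smul_mul_mul_comm _ HE HEᴴ hSQ]
  refine det_le_of_le_smul_of_not_posDef_sub
    ((hS.posSemidef_mul_conjTranspose_mul_self_mul HR).one_add_smul_posDef hρ.le).posSemidef
    ((hS.posSemidef_mul_conjTranspose_mul_self_mul HE).one_add_smul_posDef hρ.le)
    (one_add_smul_conj_le_smul hS hSQ (hQ.le_one_of_trace_eq_one htr) hc hAB) fun hpd => ?_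
  rw [add_sub_add_left_eq_sub, ← smul_sub, ← sub_mul, ← mul_sub] at hpd
  apply not_posDef_star_mul_mul hnpd S
  rw [hS.star_eq]
  have := hpd.smul (a := (ρ : ℂ)⁻¹) (inv_pos.mpr (by exact_mod_cast hρ))
  rwa [smul_smul, inv_mul_cancel₀ (by exact_mod_cast hρ.ne'), one_smul] at this

end Matrix

section SecrecyRate

variable {m m' n : Type*} [Fintype m] [Fintype m'] [Fintype n] [DecidableEq m] [DecidableEq m']

-- For `Q ⪰ 0` both determinants are positive reals, so taking real parts loses nothing.
noncomputable def secrecyRate (ρ : ℝ) (HR : Matrix m n ℂ) (HE : Matrix m' n ℂ)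
    (Q : Matrix n n ℂ) : ℝ :=
  Real.log ((1 + (ρ : ℂ) • (HR * Q * HRᴴ)).det.re) -
    Real.log ((1 + (ρ : ℂ) • (HE * Q * HEᴴ)).det.re)

theorem re_det_one_add_smul_mul_mul_conjTranspose_pos {ρ : ℝ} (hρ : 0 ≤ ρ)
    (H : Matrix m n ℂ) {Q : Matrix n n ℂ} (hQ : Q.PosSemidef) :
    0 < (1 + (ρ : ℂ) • (H * Q * Hᴴ)).det.re :=
  (Complex.lt_def.mp ((hQ.mul_mul_conjTranspose_same H).one_add_smul_posDef hρ).det_pos).1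

theorem secrecyRate_le_log {ρ c : ℝ} (hρ : 0 ≤ ρ) (HR : Matrix m n ℂ) (HE : Matrix m' n ℂ)
    {Q : Matrix n n ℂ} (hQ : Q.PosSemidef)
    (h : (1 + (ρ : ℂ) • (HR * Q * HRᴴ)).det ≤ (c : ℂ) * (1 + (ρ : ℂ) • (HE * Q * HEᴴ)).det) :
    secrecyRate ρ HR HE Q ≤ Real.log c := by
  have hR := re_det_one_add_smul_mul_mul_conjTranspose_pos hρ HR hQ
  have hE := re_det_one_add_smul_mul_mul_conjTranspose_pos hρ HE hQ
  have hle := (Complex.le_def.mp h).1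
  rw [Complex.re_ofReal_mul] at hle
  have hc : 0 < c := pos_of_mul_pos_left (hR.trans_le hle) hE.le
  rw [secrecyRate, sub_le_iff_le_add, ← Real.log_mul hc.ne' hE.ne']
  exact Real.log_le_log hR hle

variable [DecidableEq n]

theorem det_one_add_smul_mul_vecMulVec_star_mul_conjTranspose {ρ : ℝ} {H : Matrix m n ℂ}
    {u : n → ℂ} (hu : star u ⬝ᵥ u = 1) :
    (1 + (ρ : ℂ) • (H * vecMulVec u (star u) * Hᴴ)).det =
      star u ⬝ᵥ ((1 + (ρ : ℂ) • (Hᴴ * H)) *ᵥ u) := by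
  rw [det_one_add_smul_mul_vecMulVec_mul, add_mulVec, one_mulVec, dotProduct_add, hu,
    smul_mulVec, dotProduct_smul, smul_eq_mul]

theorem secrecyRate_vecMulVec {ρ c : ℝ} (hρ : 0 ≤ ρ) (HR : Matrix m n ℂ) (HE : Matrix m' n ℂ)
    {u : n → ℂ} (hu : star u ⬝ᵥ u = 1) (hc : 0 < c)
    (h : star u ⬝ᵥ ((1 + (ρ : ℂ) • (HRᴴ * HR)) *ᵥ u) =
      c * star u ⬝ᵥ ((1 + (ρ : ℂ) • (HEᴴ * HE)) *ᵥ u)) :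
    secrecyRate ρ HR HE (vecMulVec u (star u)) = Real.log c := by
  have hE := re_det_one_add_smul_mul_mul_conjTranspose_pos hρ HE (posSemidef_vecMulVec_self_star u)
  rw [det_one_add_smul_mul_vecMulVec_star_mul_conjTranspose hu] at hE
  rw [secrecyRate, det_one_add_smul_mul_vecMulVec_star_mul_conjTranspose hu,
    det_one_add_smul_mul_vecMulVec_star_mul_conjTranspose hu, h, Complex.re_ofReal_mul,
    Real.log_mul hc.ne' hE.ne']
  ring

end SecrecyRate

/-- For `n_T = 2`, if the Hermitian matrix `H_R†H_R − H_E†H_E`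
has a positive eigenvalue but is not positive definite, then the secrecy
capacity equals `log λ_max(M)` with
`M = (I + ρH_E†H_E)^{-1/2}(I + ρH_R†H_R)(I + ρH_E†H_E)^{-1/2}` positive
definite, and the supremum is attained at a rank-one `Q = u u†` with `u` a unit
vector. -/
theorem stmt_14 (nR nE : ℕ) (HR : Matrix (Fin nR) (Fin 2) ℂ)
    (HE : Matrix (Fin nE) (Fin 2) ℂ) (ρ : ℝ) (hρ : 0 < ρ)
    (hpos : ∃ (t : ℝ) (v : Fin 2 → ℂ), 0 < t ∧ v ≠ 0 ∧
      (HRᴴ * HR - HEᴴ * HE) *ᵥ v = (t : ℂ) • v)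
    (hnpd : ¬ (HRᴴ * HR - HEᴴ * HE).PosDef)
    (hB : ((1 : Matrix (Fin 2) (Fin 2) ℂ) + (ρ : ℂ) • (HEᴴ * HE)).PosSemidef)
    (M : Matrix (Fin 2) (Fin 2) ℂ)
    (hM : M = hB.sqrt⁻¹ * ((1 : Matrix (Fin 2) (Fin 2) ℂ) + (ρ : ℂ) • (HRᴴ * HR)) * hB.sqrt⁻¹) :
    M.PosDef ∧
    sSup {x : ℝ | ∃ Q : Matrix (Fin 2) (Fin 2) ℂ, Q.PosSemidef ∧ Q.trace = 1 ∧
        x = Real.log ((1 + (ρ : ℂ) • (HR * Q * HRᴴ)).det.re)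
          - Real.log ((1 + (ρ : ℂ) • (HE * Q * HEᴴ)).det.re)} = Real.log (lamMax M) ∧
    ∃ u : Fin 2 → ℂ, star u ⬝ᵥ u = 1 ∧
      (vecMulVec u (star u)).PosSemidef ∧ (vecMulVec u (star u)).trace = 1 ∧
      Real.log ((1 + (ρ : ℂ) • (HR * vecMulVec u (star u) * HRᴴ)).det.re)
        - Real.log ((1 + (ρ : ℂ) • (HE * vecMulVec u (star u) * HEᴴ)).det.re)
        = Real.log (lamMax M) := by
  set A : Matrix (Fin 2) (Fin 2) ℂ := 1 + (ρ : ℂ) • (HRᴴ * HR)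
  set B : Matrix (Fin 2) (Fin 2) ℂ := 1 + (ρ : ℂ) • (HEᴴ * HE)
  have hApd : A.PosDef := (posSemidef_conjTranspose_mul_self HR).one_add_smul_posDef hρ.le
  have hBpd : B.PosDef := (posSemidef_conjTranspose_mul_self HE).one_add_smul_posDef hρ.le
  rw [hB.sqrt_eq_cfcSqrt] at hM
  subst hM
  have hAB := hBpd.le_lamMax_inv_sqrt_conj_smul hApd.1
  obtain ⟨t, v, ht, hv, hDv⟩ := hpos
  have hc : 1 ≤ lamMax ((CFC.sqrt B)⁻¹ * A * (CFC.sqrt B)⁻¹) := by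
    refine one_le_of_le_smul_of_mulVec_sub_eq hBpd.posSemidef hAB (mul_pos hρ ht) hv ?_
    rw [show A - B = (ρ : ℂ) • (HRᴴ * HR - HEᴴ * HE) by simp only [A, B, smul_sub]; abel,
      smul_mulVec, hDv, smul_smul, Complex.ofReal_mul]
  obtain ⟨u, hu, hAu⟩ := hBpd.exists_dotProduct_mulVec_eq_lamMax_mul hApd.1
  have hval := secrecyRate_vecMulVec hρ.le HR HE hu (by linarith) hAu
  have hu_psd := posSemidef_vecMulVec_self_star u
  have hu_tr : (vecMulVec u (star u)).trace = 1 := by rw [trace_vecMulVec, dotProduct_comm, hu]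
  refine ⟨hApd.inv_sqrt_conj hBpd,
    IsGreatest.csSup_eq ⟨⟨_, hu_psd, hu_tr, hval.symm⟩, ?_⟩, u, hu, hu_psd, hu_tr, hval⟩
  rintro _ ⟨Q, hQ, htr, rfl⟩
  exact secrecyRate_le_log hρ.le HR HE hQ
    (det_le_smul_det_of_trace_eq_one HR HE hρ hc hAB hnpd hQ htr)
end

section
/- Let x ∈ ℂ^{n} be a nonzero vector and X an n×n Hermitian positive semidefinite matrix, and suppose one of the following holds: (a) X is positive definite and x x† − X has a positive eigenvalue; or (b) X has rank n − 1 and x is not in the column space of X (i.e., x is linearly independent of the eigenvectors associated with the nonzero eigenvalues of X). Then the Hermitian matrix x x† − X has exactly one positive eigenvalue and its remaining n − 1 eigenvalues (counted with multiplicity) are all negative. -/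
open Matrix
open scoped ComplexOrder

/-!
On `x^⊥` the quadratic form of `A = x x† - X` is `-v† X v`, and in both cases `ker X ∩ x^⊥ = 0`,
so `A` is negative definite on the hyperplane `x^⊥`. Two orthonormal eigenvectors with nonnegative
eigenvalues would span a plane meeting `x^⊥` nontrivially, so at most one eigenvalue is
nonnegative. A positive eigenvalue exists because some `w` has `w† A w > 0`: the given eigenvector
in case (a), a nonzero vector of `ker X` in case (b).
-/

open Finset in
lemma card_filter_pos_eq_one_and_card_filter_neg {ι : Type*} [Fintype ι] {f : ι → ℝ}
    (hpos : ∃ i, 0 < f i) (huniq : ∀ i j, 0 ≤ f i → 0 ≤ f j → i = j) :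
    #{i | 0 < f i} = 1 ∧ #{i | f i < 0} = Fintype.card ι - 1 := by
  classical
  obtain ⟨i₀, hi₀⟩ := hpos
  have hnonneg : ({i | 0 ≤ f i} : Finset ι) = {i₀} := by
    ext i
    simpa using ⟨fun h ↦ huniq i i₀ h hi₀.le, fun h ↦ h ▸ hi₀.le⟩
  have hposeq : ({i | 0 < f i} : Finset ι) = {i₀} := by
    ext i
    simpa using ⟨fun h ↦ huniq i i₀ h.le hi₀.le, fun h ↦ h ▸ hi₀⟩
  have hneg : ({i | f i < 0} : Finset ι) = {i₀}ᶜ := by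
    ext i
    simp [← hnonneg]
  exact ⟨by rw [hposeq, card_singleton], by rw [hneg, card_compl, card_singleton]⟩

namespace Matrix

variable {𝕜 n : Type*} [RCLike 𝕜] [Fintype n]

/-- Phrased as `0 ≤ v† A v → v = 0` rather than `v† A v < 0` because the order on `𝕜` is
only partial. -/
def IsNegDefOnOrthogonal (A : Matrix n n 𝕜) (y : n → 𝕜) : Prop :=
  ∀ v, star y ⬝ᵥ v = 0 → 0 ≤ star v ⬝ᵥ (A *ᵥ v) → v = 0

section Eigenvalues

variable [DecidableEq n] {A : Matrix n n 𝕜} (hA : A.IsHermitian)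
include hA

lemma IsHermitian.posSemidef_neg_iff_eigenvalues_nonpos :
    (-A).PosSemidef ↔ hA.eigenvalues ≤ 0 := by
  conv_lhs => rw [hA.spectral_theorem, ← map_neg, diagonal_neg]
  simp [Unitary.isUnit_coe.posSemidef_star_right_conjugate_iff, posSemidef_diagonal_iff,
    Pi.le_def]

lemma IsHermitian.exists_eigenvalues_pos {w : n → 𝕜} (hw : 0 < star w ⬝ᵥ (A *ᵥ w)) :
    ∃ i, 0 < hA.eigenvalues i := by
  by_contra! h
  have := (hA.posSemidef_neg_iff_eigenvalues_nonpos.mpr h).dotProduct_mulVec_nonneg w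
  rw [neg_mulVec, dotProduct_neg, neg_nonneg] at this
  exact hw.not_ge this

lemma IsHermitian.star_eigenvectorBasis_dotProduct (i j : n) :
    star ⇑(hA.eigenvectorBasis i) ⬝ᵥ ⇑(hA.eigenvectorBasis j) = if i = j then 1 else 0 := by
  rw [dotProduct_comm]
  exact orthonormal_iff_ite.mp hA.eigenvectorBasis.orthonormal i j

lemma IsHermitian.dotProduct_mulVec_eigenvectorBasis_add {i j : n} (hij : i ≠ j) (a c : 𝕜) :
    let v := a • ⇑(hA.eigenvectorBasis i) + c • ⇑(hA.eigenvectorBasis j)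
    star v ⬝ᵥ (A *ᵥ v) = hA.eigenvalues i * (star a * a) + hA.eigenvalues j * (star c * c) := by
  simp only [mulVec_add, mulVec_smul, hA.mulVec_eigenvectorBasis, star_add, star_smul,
    add_dotProduct, dotProduct_add, smul_dotProduct, dotProduct_smul,
    RCLike.real_smul_eq_coe_smul (K := 𝕜), hA.star_eigenvectorBasis_dotProduct, hij, hij.symm,
    if_true, if_false, smul_eq_mul]
  ring

variable {y : n → 𝕜} (hy : A.IsNegDefOnOrthogonal y)
include hy

lemma IsHermitian.star_dotProduct_eigenvectorBasis_ne_zero {i : n} (hi : 0 ≤ hA.eigenvalues i) :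
    star y ⬝ᵥ ⇑(hA.eigenvectorBasis i) ≠ 0 := by
  intro h
  have hb := hA.star_eigenvectorBasis_dotProduct i i
  have hnonneg : 0 ≤ star ⇑(hA.eigenvectorBasis i) ⬝ᵥ (A *ᵥ ⇑(hA.eigenvectorBasis i)) := by
    rw [hA.mulVec_eigenvectorBasis, dotProduct_smul, hb, if_pos rfl]
    simpa [RCLike.real_smul_eq_coe_smul (K := 𝕜)] using hi
  rw [hy _ h hnonneg, if_pos rfl] at hb
  simp at hb

lemma IsHermitian.eq_of_eigenvalues_nonneg {i j : n} (hi : 0 ≤ hA.eigenvalues i)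
    (hj : 0 ≤ hA.eigenvalues j) : i = j := by
  by_contra hij
  set p := star y ⬝ᵥ ⇑(hA.eigenvectorBasis i)
  set q := star y ⬝ᵥ ⇑(hA.eigenvectorBasis j)
  set v := q • ⇑(hA.eigenvectorBasis i) + (-p) • ⇑(hA.eigenvectorBasis j)
  have hyv : star y ⬝ᵥ v = 0 := by
    simp only [v, dotProduct_add, dotProduct_smul, smul_eq_mul, p, q]
    ring
  have hv : 0 ≤ star v ⬝ᵥ (A *ᵥ v) := by
    rw [hA.dotProduct_mulVec_eigenvectorBasis_add hij]
    have := star_mul_self_nonneg q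
    have := star_mul_self_nonneg (-p)
    positivity
  have hq : star ⇑(hA.eigenvectorBasis i) ⬝ᵥ v = q := by
    simp [v, dotProduct_add, dotProduct_smul, hA.star_eigenvectorBasis_dotProduct, hij]
  rw [hy v hyv hv, dotProduct_zero] at hq
  exact hA.star_dotProduct_eigenvectorBasis_ne_zero hy hj hq.symm

open Finset in
theorem IsHermitian.card_eigenvalues_pos_eq_one_and_card_eigenvalues_neg {w : n → 𝕜}
    (hw : 0 < star w ⬝ᵥ (A *ᵥ w)) :
    #{i | 0 < hA.eigenvalues i} = 1 ∧ #{i | hA.eigenvalues i < 0} = Fintype.card n - 1 :=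
  card_filter_pos_eq_one_and_card_filter_neg (hA.exists_eigenvalues_pos hw)
    fun _ _ ↦ hA.eq_of_eigenvalues_nonneg hy

end Eigenvalues

lemma exists_mulVec_eq_zero_of_rank_lt [DecidableEq n] {X : Matrix n n 𝕜}
    (h : X.rank < Fintype.card n) : ∃ v ≠ 0, X *ᵥ v = 0 := by
  rw [exists_mulVec_eq_zero_iff]
  by_contra hdet
  exact h.ne (X.rank_of_isUnit ((isUnit_iff_isUnit_det X).mpr (Ne.isUnit hdet)))

lemma dotProduct_mulVec_pos_of_mulVec_eq_smul {A : Matrix n n 𝕜} {v : n → 𝕜} {t : ℝ}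
    (ht : 0 < t) (hv : v ≠ 0) (hAv : A *ᵥ v = (t : 𝕜) • v) : 0 < star v ⬝ᵥ (A *ᵥ v) := by
  rw [hAv, dotProduct_smul, smul_eq_mul]
  exact mul_pos (RCLike.ofReal_pos.mpr ht) (dotProduct_star_self_pos_iff.mpr hv)

section RankOneUpdate

variable {x : n → 𝕜} {X : Matrix n n 𝕜}

lemma vecMulVec_star_mulVec (x v : n → 𝕜) : vecMulVec x (star x) *ᵥ v = (star x ⬝ᵥ v) • x := by
  rw [vecMulVec_mulVec, op_smul_eq_smul]

lemma PosSemidef.isNegDefOnOrthogonal_vecMulVec_sub (hX : X.PosSemidef)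
    (hker : ∀ v, X *ᵥ v = 0 → star x ⬝ᵥ v = 0 → v = 0) :
    (vecMulVec x (star x) - X).IsNegDefOnOrthogonal x := by
  intro v hxv hv
  rw [sub_mulVec, vecMulVec_star_mulVec, hxv, zero_smul, zero_sub, dotProduct_neg,
    neg_nonneg] at hv
  exact hker v ((hX.dotProduct_mulVec_zero_iff v).mp (hv.antisymm (hX.dotProduct_mulVec_nonneg v)))
    hxv

lemma dotProduct_vecMulVec_sub_mulVec_pos {w : n → 𝕜} (hXw : X *ᵥ w = 0)
    (hxw : star x ⬝ᵥ w ≠ 0) : 0 < star w ⬝ᵥ ((vecMulVec x (star x) - X) *ᵥ w) := by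
  rw [sub_mulVec, vecMulVec_star_mulVec, hXw, sub_zero, dotProduct_smul, smul_eq_mul, mul_comm,
    star_dotProduct]
  exact star_mul_self_pos (.of_ne_zero hxw)

lemma rank_lt_card_of_notMem_range (hx : x ∉ LinearMap.range X.mulVecLin) :
    X.rank < Fintype.card n := by
  have := Submodule.finrank_lt (s := LinearMap.range X.mulVecLin) fun h ↦ hx (h ▸ Submodule.mem_top)
  rwa [Module.finrank_fintype_fun_eq_card] at this

/-- For Hermitian `X` of corank one, `range X ⊕ span {x} = 𝕜ⁿ`, and `ker X` is orthogonal to both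
summands. -/
lemma IsHermitian.eq_zero_of_mulVec_eq_zero_of_star_dotProduct_eq_zero (hX : X.IsHermitian)
    (hrank : X.rank = Fintype.card n - 1) (hx : x ∉ LinearMap.range X.mulVecLin) {v : n → 𝕜}
    (hXv : X *ᵥ v = 0) (hxv : star x ⬝ᵥ v = 0) : v = 0 := by
  have htop : LinearMap.range X.mulVecLin ⊔ Submodule.span 𝕜 {x} = ⊤ := by
    apply Submodule.eq_top_of_finrank_eq
    rw [Submodule.finrank_sup_span_singleton hx, Module.finrank_fintype_fun_eq_card]
    have := rank_lt_card_of_notMem_range hx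
    exact (congrArg (· + 1) hrank).trans (by omega)
  have hvX : star v ᵥ* X = 0 := by
    rw [← hX.eq, ← star_mulVec, hXv, star_zero]
  obtain ⟨y, ⟨u, rfl⟩, z, hz, hyz⟩ := Submodule.mem_sup.mp (htop ▸ Submodule.mem_top (x := v))
  have hvy : star v ⬝ᵥ X.mulVecLin u = 0 := by
    rw [mulVecLin_apply, dotProduct_mulVec, hvX, zero_dotProduct]
  have hvz : star v ⬝ᵥ z = 0 := by
    obtain ⟨c, rfl⟩ := Submodule.mem_span_singleton.mp hz
    rw [dotProduct_smul, star_dotProduct, hxv, star_zero, smul_zero]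
  rw [← dotProduct_star_self_eq_zero]
  nth_rw 2 [← hyz]
  rw [dotProduct_add, hvy, hvz, add_zero]

end RankOneUpdate

end Matrix

theorem stmt_17_general (n : ℕ) (x : Fin n → ℂ)
    (X : Matrix (Fin n) (Fin n) ℂ) (hX : X.PosSemidef)
    (hA : (vecMulVec x (star x) - X).IsHermitian)
    (hcase :
      (X.PosDef ∧ ∃ (t : ℝ) (v : Fin n → ℂ), 0 < t ∧ v ≠ 0 ∧
        (vecMulVec x (star x) - X) *ᵥ v = (t : ℂ) • v) ∨
      (X.rank = n - 1 ∧ x ∉ LinearMap.range X.mulVecLin)) :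
    (Finset.univ.filter fun i => 0 < hA.eigenvalues i).card = 1 ∧
    (Finset.univ.filter fun i => hA.eigenvalues i < 0).card = n - 1 := by
  obtain ⟨hker, w, hw⟩ : (∀ v, X *ᵥ v = 0 → star x ⬝ᵥ v = 0 → v = 0) ∧
      ∃ w, 0 < star w ⬝ᵥ ((vecMulVec x (star x) - X) *ᵥ w) := by
    rcases hcase with ⟨hXdef, t, v, ht, hv, hAv⟩ | ⟨hrank, hxX⟩
    · refine ⟨fun u hXu _ ↦ ?_, v, dotProduct_mulVec_pos_of_mulVec_eq_smul ht hv hAv⟩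
      by_contra hu
      simpa [hXu] using hXdef.dotProduct_mulVec_pos hu
    · have hker : ∀ v, X *ᵥ v = 0 → star x ⬝ᵥ v = 0 → v = 0 := fun _ ↦
        hX.isHermitian.eq_zero_of_mulVec_eq_zero_of_star_dotProduct_eq_zero
          (by simpa using hrank) hxX
      obtain ⟨w, hw0, hXw⟩ := exists_mulVec_eq_zero_of_rank_lt (rank_lt_card_of_notMem_range hxX)
      exact ⟨hker, w, dotProduct_vecMulVec_sub_mulVec_pos hXw fun h ↦ hw0 (hker w hXw h)⟩
  simpa using hA.card_eigenvalues_pos_eq_one_and_card_eigenvalues_neg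
    (hX.isNegDefOnOrthogonal_vecMulVec_sub hker) hw

/-- Let `x ∈ ℂⁿ` be nonzero and `X` Hermitian PSD. If either
(a) `X` is positive definite and `x x† − X` has a positive eigenvalue, or
(b) `X` has rank `n − 1` and `x` is not in the column space of `X`,
then the Hermitian matrix `x x† − X` has exactly one positive eigenvalue and
its remaining `n − 1` eigenvalues (with multiplicity) are all negative. -/
theorem stmt_17 (n : ℕ) (x : Fin n → ℂ) (hx : x ≠ 0)
    (X : Matrix (Fin n) (Fin n) ℂ) (hX : X.PosSemidef)
    (hA : (vecMulVec x (star x) - X).IsHermitian)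
    (hcase :
      (X.PosDef ∧ ∃ (t : ℝ) (v : Fin n → ℂ), 0 < t ∧ v ≠ 0 ∧
        (vecMulVec x (star x) - X) *ᵥ v = (t : ℂ) • v) ∨
      (X.rank = n - 1 ∧ x ∉ LinearMap.range X.mulVecLin)) :
    (Finset.univ.filter fun i => 0 < hA.eigenvalues i).card = 1 ∧
    (Finset.univ.filter fun i => hA.eigenvalues i < 0).card = n - 1 :=
  stmt_17_general n x X hX hA hcase
end

section
/- Let D be an n×n Hermitian matrix with exactly one positive eigenvalue and n − 1 negative eigenvalues (counted with multiplicity). Then every n×n Hermitian positive semidefinite matrix X such that X D X is positive semidefinite has rank at most one. -/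
open Matrix Module
open scoped ComplexOrder

/-!
If `X` is Hermitian and `X D X ⪰ 0`, then `v ↦ v* D v` is nonnegative on the range of `X`. In an
orthonormal eigenbasis of `D` this form is negative definite on the subspace where the coordinates
belonging to nonnegative eigenvalues vanish, so the range of `X` meets that subspace only in `0`:
`rank X` is at most the number of nonnegative eigenvalues of `D`, here at most one.
-/

theorem LinearMap.exists_mem_ne_zero_apply_eq_zero_of_finrank_lt {K V V₂ : Type*} [Field K]
    [AddCommGroup V] [Module K V] [AddCommGroup V₂] [Module K V₂] [FiniteDimensional K V₂]
    {W : Submodule K V} [FiniteDimensional K W] (f : V →ₗ[K] V₂)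
    (h : finrank K V₂ < finrank K W) : ∃ v ∈ W, v ≠ 0 ∧ f v = 0 := by
  obtain ⟨w, hw, hw0⟩ :=
    (Submodule.ne_bot_iff _).mp (ker_ne_bot_of_finrank_lt (f := f ∘ₗ W.subtype) h)
  exact ⟨w, w.2, by simpa using hw0, hw⟩

namespace Matrix

variable {𝕜 n : Type*} [RCLike 𝕜] [Fintype n]

theorem IsHermitian.dotProduct_mul_mul_mulVec {X : Matrix n n 𝕜} (hX : X.IsHermitian)
    (D : Matrix n n 𝕜) (u : n → 𝕜) :
    star u ⬝ᵥ ((X * D * X) *ᵥ u) = star (X *ᵥ u) ⬝ᵥ (D *ᵥ (X *ᵥ u)) := by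
  rw [← mulVec_mulVec, ← mulVec_mulVec, dotProduct_mulVec, star_mulVec, hX.eq]

theorem rank_le_finrank_of_re_dotProduct_mulVec_neg {V : Type*} [AddCommGroup V] [Module 𝕜 V]
    [FiniteDimensional 𝕜 V] {D X : Matrix n n 𝕜} (hX : X.IsHermitian)
    (hXDX : (X * D * X).PosSemidef) (f : (n → 𝕜) →ₗ[𝕜] V)
    (hD : ∀ v, v ≠ 0 → f v = 0 → RCLike.re (star v ⬝ᵥ (D *ᵥ v)) < 0) :
    X.rank ≤ finrank 𝕜 V := by
  by_contra! h
  obtain ⟨_, ⟨u, rfl⟩, hv0, hfv⟩ := f.exists_mem_ne_zero_apply_eq_zero_of_finrank_lt h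
  have := hXDX.re_dotProduct_nonneg u
  rw [hX.dotProduct_mul_mul_mulVec] at this
  exact (hD _ hv0 hfv).not_ge this

variable [DecidableEq n] {A : Matrix n n 𝕜}

theorem IsHermitian.re_dotProduct_mulVec_eq_sum (hA : A.IsHermitian) (v : n → 𝕜) :
    RCLike.re (star v ⬝ᵥ (A *ᵥ v)) = ∑ i, hA.eigenvalues i *
      ‖(star (hA.eigenvectorUnitary : Matrix n n 𝕜) *ᵥ v) i‖ ^ 2 := by
  have hU : star v ᵥ* (hA.eigenvectorUnitary : Matrix n n 𝕜) =
      star (star (hA.eigenvectorUnitary : Matrix n n 𝕜) *ᵥ v) := by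
    rw [star_mulVec, ← star_eq_conjTranspose, star_star]
  conv_lhs => rw [hA.spectral_theorem, Unitary.conjStarAlgAut_apply]
  rw [← mulVec_mulVec, ← mulVec_mulVec, dotProduct_mulVec, hU, dotProduct, map_sum]
  refine Finset.sum_congr rfl fun i _ => ?_
  rw [mulVec_diagonal, Pi.star_apply, Function.comp_apply, mul_left_comm, RCLike.star_def,
    RCLike.conj_mul, ← RCLike.ofReal_pow, ← RCLike.ofReal_mul, RCLike.ofReal_re]

theorem IsHermitian.re_dotProduct_mulVec_neg (hA : A.IsHermitian) {v : n → 𝕜} (hv : v ≠ 0)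
    (hv₀ : ∀ i, 0 ≤ hA.eigenvalues i → (star (hA.eigenvectorUnitary : Matrix n n 𝕜) *ᵥ v) i = 0) :
    RCLike.re (star v ⬝ᵥ (A *ᵥ v)) < 0 := by
  set w := star (hA.eigenvectorUnitary : Matrix n n 𝕜) *ᵥ v
  have hw : w ≠ 0 := fun h => hv <| by
    rw [← one_mulVec v, ← Unitary.coe_mul_star_self hA.eigenvectorUnitary, Unitary.coe_star,
      ← mulVec_mulVec]
    exact (congrArg _ h).trans (mulVec_zero _)
  obtain ⟨j, hj⟩ := Function.ne_iff.mp hw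
  rw [hA.re_dotProduct_mulVec_eq_sum]
  refine Finset.sum_neg' (fun i _ => ?_) ⟨j, Finset.mem_univ _, ?_⟩
  · rcases lt_or_ge (hA.eigenvalues i) 0 with hi | hi
    · exact mul_nonpos_of_nonpos_of_nonneg hi.le (sq_nonneg _)
    · simp [w, hv₀ i hi]
  · have hj' : hA.eigenvalues j < 0 := not_le.mp fun h => hj (hv₀ j h)
    exact mul_neg_of_neg_of_pos hj' (pow_pos (norm_pos_iff.mpr hj) 2)

theorem IsHermitian.rank_le_card_nonneg_eigenvalues {D X : Matrix n n 𝕜} (hD : D.IsHermitian)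
    (hX : X.IsHermitian) (hXDX : (X * D * X).PosSemidef) :
    X.rank ≤ Fintype.card {i // 0 ≤ hD.eigenvalues i} := by
  have := rank_le_finrank_of_re_dotProduct_mulVec_neg hX hXDX
    (LinearMap.funLeft 𝕜 𝕜 Subtype.val ∘ₗ (star (hD.eigenvectorUnitary : Matrix n n 𝕜)).mulVecLin)
    fun v hv hfv => hD.re_dotProduct_mulVec_neg hv fun i hi => congr_fun hfv ⟨i, hi⟩
  rwa [finrank_fintype_fun_eq_card] at this

end Matrix

theorem stmt_19_general (n : ℕ) (D : Matrix (Fin n) (Fin n) ℂ) (hD : D.IsHermitian)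
    (h2 : (Finset.univ.filter fun i => hD.eigenvalues i < 0).card = n - 1)
    (X : Matrix (Fin n) (Fin n) ℂ) (hX : X.PosSemidef)
    (hXDX : (X * D * X).PosSemidef) :
    X.rank ≤ 1 := by
  have hcount : Fintype.card {i // 0 ≤ hD.eigenvalues i} ≤ 1 := by
    have := Finset.univ.card_filter_add_card_filter_not fun i => hD.eigenvalues i < 0
    simp only [not_lt, Finset.card_univ, Fintype.card_fin, h2] at this
    rw [Fintype.card_subtype]
    omega
  exact (hD.rank_le_card_nonneg_eigenvalues hX.isHermitian hXDX).trans hcount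

/-- If the Hermitian matrix `D` has exactly one positive
eigenvalue and `n − 1` negative eigenvalues (with multiplicity), then every
Hermitian PSD matrix `X` with `X D X ⪰ 0` has rank at most one. -/
theorem stmt_19 (n : ℕ) (D : Matrix (Fin n) (Fin n) ℂ) (hD : D.IsHermitian)
    (h1 : (Finset.univ.filter fun i => 0 < hD.eigenvalues i).card = 1)
    (h2 : (Finset.univ.filter fun i => hD.eigenvalues i < 0).card = n - 1)
    (X : Matrix (Fin n) (Fin n) ℂ) (hX : X.PosSemidef)
    (hXDX : (X * D * X).PosSemidef) :
    X.rank ≤ 1 :=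
  stmt_19_general n D hD h2 X hX hXDX
end
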